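/- arXiv:1304.6165 — 8 statements merged into one kernel-verified Lean document; each statement's English description precedes it below -/
import Mathlib

section
/- Let (Ω, 𝓕, P) be a probability space with a sub-σ-algebra 𝓖 ⊆ 𝓕. Let D and M_S be strictly positive random variables with D·M_S integrable, let M_0 > 0 be a constant with E_P[D·M_S] = M_0, and let D_t, M_t be strictly positive 𝓖-measurable random variables satisfying the martingale property D_t·M_t = E_P[D·M_S | 𝓖] P-almost surely. Define the probability measure Q on (Ω, 𝓕) by dQ/dP = D·M_S/M_0. Then for every 𝓕-measurable random variable ξ such that ξ/M_S is Q-integrable, one has E_P[(D/D_t)·ξ | 𝓖] = M_t · E_Q[ξ/M_S | 𝓖] P-almost surely (the change-of-numeraire pricing formula: the price of the claim ξ equals the numeraire value M_t times the conditional expectation of the forward payoff ξ/M_S under the forward measure Q). -/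
open MeasureTheory
open scoped NNReal ENNReal

/-- Change-of-numeraire pricing formula: with discount factors `D` (up to time `S`) and
`Dt` (up to time `t`), a numeraire `(Mt, MS)` whose discounted price is a `P`-martingale,
i.e. `Dt·Mt = E_P[D·MS | 𝓖]`, `E_P[D·MS] = M0 > 0`, and the forward measure
`Q` with density `dQ/dP = D·MS/M0`, the price of a claim `ξ` satisfies
`E_P[(D/Dt)·ξ | 𝓖] = Mt · E_Q[ξ/MS | 𝓖]` `P`-a.s. -/
theorem change_of_numeraire_pricing
    {Ω : Type*} {m : MeasurableSpace Ω} [MeasurableSpace Ω]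
    (hm : m ≤ (inferInstance : MeasurableSpace Ω))
    (P : Measure Ω) [IsProbabilityMeasure P]
    (D MS Dt Mt : Ω → ℝ) (M0 : ℝ)
    (hDmeas : Measurable D) (hMSmeas : Measurable MS)
    (hDpos : ∀ ω, 0 < D ω) (hMSpos : ∀ ω, 0 < MS ω)
    (hDMSint : Integrable (fun ω => D ω * MS ω) P)
    (hM0 : 0 < M0) (hM0exp : ∫ ω, D ω * MS ω ∂P = M0)
    (hDtpos : ∀ ω, 0 < Dt ω) (hMtpos : ∀ ω, 0 < Mt ω)
    (hDtmeas : StronglyMeasurable[m] Dt) (hMtmeas : StronglyMeasurable[m] Mt)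
    (hmart : (fun ω => Dt ω * Mt ω) =ᵐ[P] P[fun ω => D ω * MS ω|m])
    (Q : Measure Ω)
    (hQ : Q = P.withDensity (fun ω => ENNReal.ofReal (D ω * MS ω / M0)))
    (ξ : Ω → ℝ) (hξmeas : Measurable ξ)
    (hξint : Integrable (fun ω => ξ ω / MS ω) Q)
    (hξint' : Integrable (fun ω => (D ω / Dt ω) * ξ ω) P) :
    P[fun ω => (D ω / Dt ω) * ξ ω|m]
      =ᵐ[P] fun ω => Mt ω * (Q[fun ω' => ξ ω' / MS ω'|m]) ω := by
  -- notation
  set ρ : Ω → ℝ := fun ω => D ω * MS ω / M0 with hρ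
  have hρpos : ∀ ω, 0 < ρ ω := fun ω => div_pos (mul_pos (hDpos ω) (hMSpos ω)) hM0
  have hρmeas : Measurable ρ := (hDmeas.mul hMSmeas).div_const M0
  set ρnn : Ω → ℝ≥0 := fun ω => (ρ ω).toNNReal with hρnn
  have hρnnmeas : Measurable ρnn := hρmeas.real_toNNReal
  have hQ' : Q = P.withDensity (fun ω => (ρnn ω : ℝ≥0∞)) := hQ
  have hcoe : ∀ ω, ((ρnn ω : ℝ≥0) : ℝ) = ρ ω := fun ω =>
    Real.coe_toNNReal _ (hρpos ω).le
  -- Q is a probability measure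
  have hρint : Integrable ρ P := hDMSint.div_const M0
  haveI : IsProbabilityMeasure Q := by
    constructor
    rw [hQ', withDensity_apply _ MeasurableSet.univ, Measure.restrict_univ]
    have : ∫⁻ ω, ((ρnn ω : ℝ≥0∞)) ∂P = ENNReal.ofReal (∫ ω, ρ ω ∂P) :=
      ofReal_integral_eq_lintegral_ofReal hρint
        (Filter.Eventually.of_forall fun ω => (hρpos ω).le) |>.symm
    rw [this]
    have : ∫ ω, ρ ω ∂P = 1 := by
      simp only [hρ, integral_div, hM0exp]
      field_simp
    rw [this]; simp
  haveI : SigmaFinite (P.trim hm) := by infer_instance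
  haveI : SigmaFinite (Q.trim hm) := by infer_instance
  -- integrability transfer between P and Q
  have hint_iff : ∀ g : Ω → ℝ, Integrable g Q ↔ Integrable (fun ω => ρ ω * g ω) P := by
    intro g
    rw [hQ', integrable_withDensity_iff_integrable_smul hρnnmeas]
    constructor <;> intro h <;> refine h.congr (Filter.Eventually.of_forall fun ω => ?_)
    · simp [NNReal.smul_def, hcoe ω]
    · simp [NNReal.smul_def, hcoe ω]
  set Y : Ω → ℝ := fun ω => ξ ω / MS ω with hY
  set cY : Ω → ℝ := Q[Y|m] with hcY
  have hDtne : ∀ ω, Dt ω ≠ 0 := fun ω => (hDtpos ω).ne'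
  have hMSne : ∀ ω, MS ω ≠ 0 := fun ω => (hMSpos ω).ne'
  -- `Dt⁻¹ * Y` is `Q`-integrable
  have hWint0 : Integrable (fun ω => (Dt ω)⁻¹ * Y ω) Q := by
    rw [hint_iff]
    refine (hξint'.const_mul (1 / M0)).congr
      (Filter.Eventually.of_forall fun ω => ?_)
    simp only [hρ, hY]
    field_simp [hMSne ω, hDtne ω, hM0.ne']
  -- pull-out property under Q
  have hDtinvm : StronglyMeasurable[m] fun ω => (Dt ω)⁻¹ :=
    (hDtmeas.measurable.inv).stronglyMeasurable
  have hpullQ : Q[fun ω => (Dt ω)⁻¹ * Y ω|m] =ᵐ[Q] fun ω => (Dt ω)⁻¹ * cY ω :=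
    condExp_mul_of_stronglyMeasurable_left hDtinvm hWint0 hξint
  set W : Ω → ℝ := fun ω => (Dt ω)⁻¹ * cY ω with hW
  have hWQint : Integrable W Q := integrable_condExp.congr hpullQ
  have hWPint : Integrable (fun ω => ρ ω * W ω) P := (hint_iff W).mp hWQint
  have hfWint : Integrable (fun ω => W ω * (D ω * MS ω)) P := by
    refine (hWPint.const_mul M0).congr (Filter.Eventually.of_forall fun ω => ?_)
    simp only [hρ]
    field_simp [hMSne ω, hDtne ω, hM0.ne']
  -- pull-out property under P
  have hWm : StronglyMeasurable[m] W := hDtinvm.mul stronglyMeasurable_condExp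
  have hpullP : P[fun ω => W ω * (D ω * MS ω)|m]
      =ᵐ[P] fun ω => W ω * (P[fun ω => D ω * MS ω|m]) ω :=
    condExp_mul_of_stronglyMeasurable_left hWm hfWint hDMSint
  -- the candidate for the conditional expectation
  have hHdef : (fun ω => Mt ω * cY ω) =ᵐ[P] P[fun ω => W ω * (D ω * MS ω)|m] := by
    filter_upwards [hpullP, hmart] with ω h1 h2
    rw [h1, ← h2]
    simp only [hW]
    field_simp [hMSne ω, hDtne ω, hM0.ne']
  have hHint : Integrable (fun ω => Mt ω * cY ω) P := integrable_condExp.congr hHdef.symm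
  have hHm : AEStronglyMeasurable[m] (fun ω => Mt ω * cY ω) P :=
    (hMtmeas.mul stronglyMeasurable_condExp).aestronglyMeasurable
  -- equality of set integrals
  have hseteq : ∀ s, MeasurableSet[m] s → P s < ⊤ →
      ∫ ω in s, Mt ω * cY ω ∂P = ∫ ω in s, (D ω / Dt ω) * ξ ω ∂P := by
    intro s hs _
    have hs' : MeasurableSet s := hm s hs
    calc ∫ ω in s, Mt ω * cY ω ∂P
        = ∫ ω in s, (P[fun ω => W ω * (D ω * MS ω)|m]) ω ∂P :=
          integral_congr_ae (ae_restrict_of_ae hHdef)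
      _ = ∫ ω in s, W ω * (D ω * MS ω) ∂P := setIntegral_condExp hm hfWint hs
      _ = M0 * ∫ ω in s, ρ ω * W ω ∂P := by
          rw [← integral_const_mul]
          refine integral_congr_ae (Filter.Eventually.of_forall fun ω => ?_)
          simp only [hρ]
          field_simp [hMSne ω, hDtne ω, hM0.ne']
      _ = M0 * ∫ ω in s, W ω ∂Q := by
          rw [hQ', setIntegral_withDensity_eq_setIntegral_smul hρnnmeas _ hs']
          congr 1
          exact integral_congr_ae (Filter.Eventually.of_forall fun ω => by
            simp [NNReal.smul_def, hcoe ω])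
      _ = M0 * ∫ ω in s, (Q[fun ω => (Dt ω)⁻¹ * Y ω|m]) ω ∂Q := by
          congr 1
          exact (integral_congr_ae (ae_restrict_of_ae hpullQ)).symm
      _ = M0 * ∫ ω in s, (Dt ω)⁻¹ * Y ω ∂Q := by
          rw [setIntegral_condExp hm hWint0 hs]
      _ = M0 * ∫ ω in s, ρ ω * ((Dt ω)⁻¹ * Y ω) ∂P := by
          rw [hQ', setIntegral_withDensity_eq_setIntegral_smul hρnnmeas _ hs']
          congr 1
          exact integral_congr_ae (Filter.Eventually.of_forall fun ω => by
            simp [NNReal.smul_def, hcoe ω])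
      _ = ∫ ω in s, (D ω / Dt ω) * ξ ω ∂P := by
          rw [← integral_const_mul]
          refine integral_congr_ae (Filter.Eventually.of_forall fun ω => ?_)
          simp only [hρ, hY]
          field_simp [hMSne ω, hDtne ω, hM0.ne']
  exact (ae_eq_condExp_of_forall_setIntegral_eq hm hξint'
    (fun s _ _ => hHint.integrableOn) hseteq hHm).symm
end

section
/- Abstract Bayes formula for conditional expectation under a change of measure: let (Ω, 𝓕, P) be a probability space, 𝓖 ⊆ 𝓕 a sub-σ-algebra, Λ ≥ 0 an 𝓕-measurable random variable with E_P[Λ] = 1, and Q = P.withDensity Λ. Then for every Q-integrable random variable ξ, E_P[Λ·ξ | 𝓖] = E_P[Λ | 𝓖] · E_Q[ξ | 𝓖] holds P-almost surely. -/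
open MeasureTheory
open scoped NNReal ENNReal

/-- Abstract Bayes formula for conditional expectation under a change of measure:
if `Λ ≥ 0` is measurable with `E_P[Λ] = 1` and `Q = P.withDensity Λ`, then for every
`Q`-integrable `ξ`, `E_P[Λ·ξ | 𝓖] = E_P[Λ | 𝓖] · E_Q[ξ | 𝓖]` holds `P`-a.s. -/
theorem abstract_bayes_formula
    {Ω : Type*} {m : MeasurableSpace Ω} [MeasurableSpace Ω]
    (hm : m ≤ (inferInstance : MeasurableSpace Ω))
    (P : Measure Ω) [IsProbabilityMeasure P]
    (Λ : Ω → ℝ) (hΛmeas : Measurable Λ) (hΛpos : ∀ ω, 0 ≤ Λ ω)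
    (hΛint : Integrable Λ P) (hΛexp : ∫ ω, Λ ω ∂P = 1)
    (Q : Measure Ω) (hQ : Q = P.withDensity (fun ω => ENNReal.ofReal (Λ ω)))
    (ξ : Ω → ℝ) (hξ : Integrable ξ Q) :
    P[fun ω => Λ ω * ξ ω|m] =ᵐ[P] fun ω => (P[Λ|m]) ω * (Q[ξ|m]) ω := by
  set f : Ω → ℝ≥0 := fun ω => (Λ ω).toNNReal with hf_def
  have hf : Measurable f := hΛmeas.real_toNNReal
  have hQ' : Q = P.withDensity (fun ω => (f ω : ℝ≥0∞)) := hQ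
  have hcoe : ∀ ω, (f ω : ℝ) = Λ ω := fun ω => Real.coe_toNNReal _ (hΛpos ω)
  -- Q is a probability measure
  haveI hQprob : IsProbabilityMeasure Q := by
    constructor
    rw [hQ, withDensity_apply _ MeasurableSet.univ, Measure.restrict_univ,
      ← ofReal_integral_eq_lintegral_ofReal hΛint (Filter.Eventually.of_forall hΛpos),
      hΛexp, ENNReal.ofReal_one]
  haveI : SigmaFinite (P.trim hm) := inferInstance
  haveI : SigmaFinite (Q.trim hm) := inferInstance
  -- integrability transfer
  have htrans : ∀ g : Ω → ℝ, Integrable g Q ↔ Integrable (fun ω => Λ ω * g ω) P := by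
    intro g
    rw [hQ', integrable_withDensity_iff_integrable_smul hf]
    simp only [NNReal.smul_def, smul_eq_mul, hcoe]
  -- set integral transfer
  have hsetint : ∀ (g : Ω → ℝ) (s : Set Ω), MeasurableSet s →
      ∫ ω in s, g ω ∂Q = ∫ ω in s, Λ ω * g ω ∂P := by
    intro g s hs
    rw [hQ', setIntegral_withDensity_eq_setIntegral_smul hf g hs]
    simp only [NNReal.smul_def, smul_eq_mul, hcoe]
  have hΛξ : Integrable (fun ω => Λ ω * ξ ω) P := (htrans ξ).mp hξ
  have hcond_int_Q : Integrable (Q[ξ|m]) Q := integrable_condExp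
  have hΛcond : Integrable (fun ω => Λ ω * (Q[ξ|m]) ω) P := (htrans _).mp hcond_int_Q
  have hcondmeas : StronglyMeasurable[m] (Q[ξ|m]) := stronglyMeasurable_condExp
  -- pull-out property: P[Q[ξ|m] * Λ | m] = Q[ξ|m] * P[Λ|m]
  have hpull : P[fun ω => (Q[ξ|m]) ω * Λ ω|m] =ᵐ[P] fun ω => (Q[ξ|m]) ω * (P[Λ|m]) ω := by
    have := condExp_mul_of_stronglyMeasurable_left (μ := P) hcondmeas
      (by rw [mul_comm]; exact hΛcond) hΛint
    exact this
  -- the candidate g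
  have hg_eq_condexp : (fun ω => (P[Λ|m]) ω * (Q[ξ|m]) ω) =ᵐ[P] P[fun ω => Λ ω * ξ ω|m] := by
    refine ae_eq_condExp_of_forall_setIntegral_eq hm hΛξ ?_ ?_ ?_
    · intro s hs hμs
      have hgint : Integrable (fun ω => (P[Λ|m]) ω * (Q[ξ|m]) ω) P :=
        integrable_condExp.congr (hpull.mono fun ω h => h.trans (mul_comm _ _))
      exact hgint.integrableOn
    · intro s hs hμs
      have hmeas_s : MeasurableSet s := hm s hs
      calc ∫ ω in s, (P[Λ|m]) ω * (Q[ξ|m]) ω ∂P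
          = ∫ ω in s, (Q[ξ|m]) ω * (P[Λ|m]) ω ∂P := by
            simp_rw [mul_comm]
        _ = ∫ ω in s, (P[fun ω => (Q[ξ|m]) ω * Λ ω|m]) ω ∂P :=
            (setIntegral_congr_ae hmeas_s (hpull.mono fun ω h _ => h.symm))
        _ = ∫ ω in s, (Q[ξ|m]) ω * Λ ω ∂P :=
            setIntegral_condExp hm (by simpa [mul_comm] using hΛcond) hs
        _ = ∫ ω in s, Λ ω * (Q[ξ|m]) ω ∂P := by simp_rw [mul_comm]
        _ = ∫ ω in s, (Q[ξ|m]) ω ∂Q := (hsetint _ s hmeas_s).symm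
        _ = ∫ ω in s, ξ ω ∂Q := setIntegral_condExp hm hξ hs
        _ = ∫ ω in s, Λ ω * ξ ω ∂P := hsetint ξ s hmeas_s
    · exact StronglyMeasurable.aestronglyMeasurable
        (stronglyMeasurable_condExp.mul stronglyMeasurable_condExp)
  exact hg_eq_condexp.symm
end

section
/- Static Black–Scholes–Margrabe formula: let γ be the standard Gaussian measure on ℝ (mean 0, variance 1). Then for all real numbers x > 0, κ > 0 and v > 0, ∫_ℝ max(x·exp(v·z − v²/2) − κ, 0) dγ(z) = x·Φ⁰₊(κ, v, x) − κ·Φ⁰₋(κ, v, x). -/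
open MeasureTheory Real
open scoped ENNReal NNReal

/-- The standard normal cumulative distribution function. -/
noncomputable def Phi (x : ℝ) : ℝ :=
  ∫ z in Set.Iic x, Real.exp (-z^2/2) / Real.sqrt (2 * Real.pi)

noncomputable def phi (z : ℝ) : ℝ := Real.exp (-z^2/2) / Real.sqrt (2 * Real.pi)

lemma Phi_eq (t : ℝ) : Phi t = ∫ z in Set.Iic t, phi z := rfl

lemma phi_integrable : Integrable phi := by
  have h : Integrable (fun z : ℝ => Real.exp (-(1/2 : ℝ) * z^2)) :=
    integrable_exp_neg_mul_sq (by norm_num)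
  have h2 := h.div_const (Real.sqrt (2 * Real.pi))
  convert h2 using 2 with z
  unfold phi
  ring_nf

lemma phi_integrable_shift (v : ℝ) : Integrable (fun z => phi (z - v)) :=
  phi_integrable.comp_sub_right v

lemma phi_Ici (c : ℝ) : ∫ z in Set.Ici c, phi z = ∫ z in Set.Iic (-c), phi z := by
  have := integral_comp_neg_Iic (-c) phi
  simp only [neg_neg] at this
  rw [MeasureTheory.integral_Ici_eq_integral_Ioi, ← this]
  apply setIntegral_congr_fun measurableSet_Iic
  intro z _
  unfold phi
  simp

lemma phi_shift_Ici (c v : ℝ) :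
    ∫ z in Set.Ici c, phi (z - v) = ∫ z in Set.Ici (c - v), phi z := by
  rw [← integral_indicator measurableSet_Ici, ← integral_indicator measurableSet_Ici]
  have : ∀ z : ℝ, (Set.Ici c).indicator (fun z => phi (z - v)) z
      = (Set.Ici (c - v)).indicator phi (z + -v) := by
    intro z
    by_cases hz : z ∈ Set.Ici c
    · rw [Set.indicator_of_mem hz,
        Set.indicator_of_mem (by simpa [sub_eq_add_neg] using sub_le_sub_right hz.out v)]
      simp [sub_eq_add_neg]
    · rw [Set.indicator_of_notMem hz, Set.indicator_of_notMem]
      intro h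
      apply hz
      have : c - v ≤ z - v := by simpa [sub_eq_add_neg] using h.out
      simpa using sub_le_sub_right this (-v)
  simp_rw [this]
  exact MeasureTheory.integral_add_right_eq_self ((Set.Ici (c - v)).indicator phi) (-v)

/-- Static Black–Scholes–Margrabe formula: for the standard Gaussian measure `γ` on `ℝ`
and all `x, κ, v > 0`,
`∫ max(x·exp(v·z − v²/2) − κ, 0) dγ(z) = x·Φ(log(x/κ)/v + v/2) − κ·Φ(log(x/κ)/v − v/2)`. -/
theorem static_black_scholes_margrabe {x κ v : ℝ} (hx : 0 < x) (hκ : 0 < κ) (hv : 0 < v) :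
    ∫ z, max (x * Real.exp (v * z - v^2/2) - κ) 0 ∂(ProbabilityTheory.gaussianReal 0 1)
      = x * Phi (Real.log (x / κ) / v + v / 2) - κ * Phi (Real.log (x / κ) / v - v / 2) := by
  set c : ℝ := (Real.log (κ / x) + v^2/2) / v with hc
  -- step 1: density
  have hd : (ProbabilityTheory.gaussianReal 0 1)
      = volume.withDensity
          (fun z => ((ProbabilityTheory.gaussianPDFReal 0 1 z).toNNReal : ℝ≥0∞)) := by
    rw [ProbabilityTheory.gaussianReal_of_var_ne_zero 0 one_ne_zero]; rfl
  have hm : Measurable fun z : ℝ => (ProbabilityTheory.gaussianPDFReal 0 1 z).toNNReal :=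
    measurable_real_toNNReal.comp (ProbabilityTheory.measurable_gaussianPDFReal 0 1)
  rw [hd, integral_withDensity_eq_integral_smul hm]
  have hpdf : ∀ z : ℝ, ((ProbabilityTheory.gaussianPDFReal 0 1 z).toNNReal : ℝ) = phi z := by
    intro z
    rw [Real.coe_toNNReal _ (ProbabilityTheory.gaussianPDFReal_nonneg 0 1 z)]
    rw [ProbabilityTheory.gaussianPDFReal]
    unfold phi
    simp only [NNReal.coe_one, mul_one, sub_zero]
    rw [inv_mul_eq_div]
  have hsmul : ∀ z : ℝ, (ProbabilityTheory.gaussianPDFReal 0 1 z).toNNReal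
        • max (x * Real.exp (v * z - v^2/2) - κ) 0
      = phi z * max (x * Real.exp (v * z - v^2/2) - κ) 0 := by
    intro z
    rw [NNReal.smul_def, hpdf, smul_eq_mul]
  simp_rw [hsmul]
  -- step 2: indicator
  have key : ∀ z : ℝ, phi z * max (x * Real.exp (v * z - v^2/2) - κ) 0
      = (Set.Ici c).indicator (fun z => (x * Real.exp (v * z - v^2/2) - κ) * phi z) z := by
    intro z
    by_cases hz : z ∈ Set.Ici c
    · rw [Set.indicator_of_mem hz]
      have hzc : c ≤ z := hz
      have hvz : Real.log (κ / x) + v^2/2 ≤ v * z := by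
        have := (div_le_iff₀ hv).mp hzc
        nlinarith
      have h1 : Real.log (κ / x) ≤ v * z - v^2/2 := by linarith
      have h2 : κ ≤ x * Real.exp (v * z - v^2/2) := by
        have h3 := Real.exp_le_exp.mpr h1
        rw [Real.exp_log (div_pos hκ hx)] at h3
        calc κ = x * (κ / x) := by field_simp
        _ ≤ x * Real.exp (v * z - v^2/2) := by nlinarith
      rw [max_eq_left (by linarith)]
      ring
    · rw [Set.indicator_of_notMem hz]
      have hzc : z < c := lt_of_not_ge hz
      have hvz : v * z < Real.log (κ / x) + v^2/2 := by
        have := (lt_div_iff₀ hv).mp hzc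
        nlinarith
      have h1 : v * z - v^2/2 < Real.log (κ / x) := by linarith
      have h2 : x * Real.exp (v * z - v^2/2) < κ := by
        have h3 := Real.exp_lt_exp.mpr h1
        rw [Real.exp_log (div_pos hκ hx)] at h3
        calc x * Real.exp (v * z - v^2/2) < x * (κ / x) := by nlinarith
        _ = κ := by field_simp
      rw [max_eq_right (by linarith), mul_zero]
  simp_rw [key]
  rw [integral_indicator measurableSet_Ici]
  -- step 3: split and complete the square
  have hexp : ∀ z : ℝ, Real.exp (v * z - v^2/2) * phi z = phi (z - v) := by
    intro z
    unfold phi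
    rw [mul_div_assoc', ← Real.exp_add]
    congr 2
    ring
  have hsplit : ∫ z in Set.Ici c, (x * Real.exp (v * z - v^2/2) - κ) * phi z
      = x * (∫ z in Set.Ici c, phi (z - v)) - κ * ∫ z in Set.Ici c, phi z := by
    have e : ∀ z : ℝ, (x * Real.exp (v * z - v^2/2) - κ) * phi z
        = x * phi (z - v) - κ * phi z := by
      intro z
      rw [← hexp z]
      ring
    simp_rw [e]
    rw [integral_sub (((phi_integrable_shift v).const_mul x).restrict)
        ((phi_integrable.const_mul κ).restrict),
      integral_const_mul, integral_const_mul]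
  rw [hsplit, phi_shift_Ici, phi_Ici, phi_Ici, ← Phi_eq, ← Phi_eq]
  -- step 4: arithmetic on the arguments
  have hlog : Real.log (κ / x) = - Real.log (x / κ) := by
    rw [Real.log_div hκ.ne' hx.ne', Real.log_div hx.ne' hκ.ne']
    ring
  have e1 : -(c - v) = Real.log (x / κ) / v + v / 2 := by
    rw [hc, hlog]
    field_simp
    ring
  have e2 : -c = Real.log (x / κ) / v - v / 2 := by
    rw [hc, hlog]
    field_simp
    ring
  rw [e1, e2]
end

section
/- Conditional Black–Scholes formula for the forward price: let (Ω, 𝓕, P) be a probability space, 𝓖 ⊆ 𝓕 a sub-σ-algebra, Z a standard Gaussian random variable independent of 𝓖, v > 0, κ > 0, and X a strictly positive, integrable, 𝓖-measurable random variable. Set X_T := X·exp(v·Z − v²/2). Then E[max(X_T − κ, 0) | 𝓖] = X·Φ⁰₊(κ, v, X) − κ·Φ⁰₋(κ, v, X) P-almost surely. -/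
open MeasureTheory Real

open Set ProbabilityTheory

noncomputable def gpdf (z : ℝ) : ℝ := Real.exp (-z^2/2) / Real.sqrt (2 * Real.pi)

lemma gpdf_eq (z : ℝ) : gpdf z = gaussianPDFReal 0 1 z := by
  simp [gpdf, gaussianPDFReal, div_eq_inv_mul, mul_comm]

lemma gpdf_nonneg (z : ℝ) : 0 ≤ gpdf z := by
  unfold gpdf; positivity

lemma gpdf_even (z : ℝ) : gpdf (-z) = gpdf z := by
  simp [gpdf, neg_sq]

lemma integrable_gpdf : Integrable gpdf := by
  simp_rw [funext gpdf_eq]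
  exact integrable_gaussianPDFReal 0 1

lemma integral_gpdf : ∫ z, gpdf z = 1 := by
  simp_rw [funext gpdf_eq]
  exact integral_gaussianPDFReal_eq_one 0 one_ne_zero

lemma measurable_gpdf : Measurable gpdf := by
  simp_rw [funext gpdf_eq]; exact measurable_gaussianPDFReal 0 1

lemma gpdf_shift (z v : ℝ) : gpdf z * Real.exp (v*z - v^2/2) = gpdf (z - v) := by
  unfold gpdf
  rw [div_mul_eq_mul_div, ← Real.exp_add]
  ring_nf

lemma integrable_gpdf_shift (v : ℝ) : Integrable (fun z => gpdf (z - v)) := by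
  exact integrable_gpdf.comp_sub_right v

lemma setIntegral_gpdf_shift (a v : ℝ) :
    ∫ z in Ici a, gpdf (z - v) = ∫ z in Ici (a - v), gpdf z := by
  have A : MeasurableEmbedding (fun x : ℝ => x - v) :=
    (Homeomorph.subRight v).isClosedEmbedding.measurableEmbedding
  have := A.setIntegral_map (μ := volume) gpdf (Ici (a - v))
  rw [show Measure.map (fun x : ℝ => x - v) volume = volume by
    simpa using (measurePreserving_sub_right volume v).map_eq] at this
  rw [show (fun x : ℝ => x - v) ⁻¹' Ici (a - v) = Ici a by
    ext x; simp] at this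
  exact this.symm

lemma setIntegral_gpdf_Ici (a : ℝ) : ∫ z in Ici a, gpdf z = Phi (-a) := by
  rw [integral_Ici_eq_integral_Ioi]
  have : ∀ z ∈ Ioi a, gpdf z = gpdf (-z) := fun z _ => (gpdf_even z).symm
  rw [setIntegral_congr_fun measurableSet_Ioi this, integral_comp_neg_Ioi]
  rfl

lemma Phi_eq_s4 (x : ℝ) : Phi x = ∫ z in Iic x, gpdf z := rfl

lemma Phi_nonneg (x : ℝ) : 0 ≤ Phi x :=
  setIntegral_nonneg measurableSet_Iic fun z _ => gpdf_nonneg z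

lemma Phi_le_one (x : ℝ) : Phi x ≤ 1 := by
  rw [Phi_eq_s4, ← integral_gpdf]
  exact setIntegral_le_integral integrable_gpdf (ae_of_all _ gpdf_nonneg)

lemma monotone_Phi : Monotone Phi := by
  intro a b hab
  rw [Phi_eq_s4, Phi_eq_s4]
  exact setIntegral_mono_set integrable_gpdf.integrableOn (ae_of_all _ gpdf_nonneg)
    ((Iic_subset_Iic.mpr hab).eventuallyLE)

lemma measurable_Phi : Measurable Phi := monotone_Phi.measurable

lemma bs_integral {v κ x : ℝ} (hv : 0 < v) (hκ : 0 < κ) (hx : 0 < x) :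
    ∫ z, gpdf z * max (x * Real.exp (v*z - v^2/2) - κ) 0 =
      x * Phi (Real.log (x/κ)/v + v/2) - κ * Phi (Real.log (x/κ)/v - v/2) := by
  obtain ⟨z₀, hz₀⟩ : ∃ z₀ : ℝ, z₀ = v/2 - Real.log (x/κ)/v := ⟨_, rfl⟩
  have hlogk : Real.log (κ/x) = - Real.log (x/κ) := by
    rw [← Real.log_inv]; congr 1; rw [inv_div]
  have hvz₀ : v * z₀ = v^2/2 - Real.log (x/κ) := by
    rw [hz₀]; field_simp
  have hpt : ∀ z, gpdf z * max (x * Real.exp (v*z - v^2/2) - κ) 0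
      = (Ici z₀).indicator (fun z => x * gpdf (z - v) - κ * gpdf z) z := by
    intro z
    by_cases h : z₀ ≤ z
    · have h1 : Real.log (κ/x) ≤ v*z - v^2/2 := by
        rw [hlogk]
        have h2 := mul_le_mul_of_nonneg_left h hv.le
        linarith
      have hk : κ ≤ x * Real.exp (v*z - v^2/2) := by
        calc κ = x * (κ/x) := by field_simp
          _ ≤ x * Real.exp (v*z - v^2/2) := by
              refine mul_le_mul_of_nonneg_left ?_ hx.le
              rw [← Real.exp_log (div_pos hκ hx)]
              exact Real.exp_le_exp.mpr h1
      rw [indicator_of_mem (mem_Ici.mpr h), max_eq_left (by linarith), ← gpdf_shift z v]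
      ring
    · push_neg at h
      have h1 : v*z - v^2/2 ≤ Real.log (κ/x) := by
        rw [hlogk]
        have h2 := mul_le_mul_of_nonneg_left h.le hv.le
        linarith
      have hk : x * Real.exp (v*z - v^2/2) ≤ κ := by
        calc x * Real.exp (v*z - v^2/2) ≤ x * (κ/x) := by
              refine mul_le_mul_of_nonneg_left ?_ hx.le
              rw [← Real.exp_log (div_pos hκ hx)]
              exact Real.exp_le_exp.mpr h1
          _ = κ := by field_simp
      rw [indicator_of_notMem (by simpa using h), max_eq_right (by linarith), mul_zero]
  have e1 : -(z₀ - v) = Real.log (x/κ)/v + v/2 := by rw [hz₀]; ring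
  have e2 : -z₀ = Real.log (x/κ)/v - v/2 := by rw [hz₀]; ring
  calc ∫ z, gpdf z * max (x * Real.exp (v*z - v^2/2) - κ) 0
      = ∫ z, (Ici z₀).indicator (fun z => x * gpdf (z - v) - κ * gpdf z) z := by
        exact integral_congr_ae (ae_of_all _ hpt)
    _ = ∫ z in Ici z₀, (x * gpdf (z - v) - κ * gpdf z) := integral_indicator measurableSet_Ici
    _ = x * (∫ z in Ici z₀, gpdf (z - v)) - κ * ∫ z in Ici z₀, gpdf z := by
        rw [integral_sub (((integrable_gpdf_shift v).const_mul x).integrableOn)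
          ((integrable_gpdf.const_mul κ).integrableOn), integral_const_mul, integral_const_mul]
    _ = x * Phi (Real.log (x/κ)/v + v/2) - κ * Phi (Real.log (x/κ)/v - v/2) := by
        rw [setIntegral_gpdf_shift, setIntegral_gpdf_Ici, setIntegral_gpdf_Ici, e1, e2]

section Aux

open MeasureTheory Real Set ProbabilityTheory

lemma my_indep_mono {Ω : Type*} {m₁ m₂ m₁' m₂' : MeasurableSpace Ω} {mΩ : MeasurableSpace Ω}
    {μ : Measure Ω} (h : Indep m₁ m₂ μ) (h1 : m₁' ≤ m₁) (h2 : m₂' ≤ m₂) : Indep m₁' m₂' μ := by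
  rw [Indep_iff] at h ⊢
  exact fun t1 t2 ht1 ht2 => h t1 t2 (h1 _ ht1) (h2 _ ht2)

lemma gaussianReal_eq_withDensity :
    gaussianReal 0 1 = MeasureTheory.volume.withDensity
      fun z => ((gaussianPDFReal 0 1 z).toNNReal : ENNReal) := by
  rw [gaussianReal_of_var_ne_zero 0 one_ne_zero]
  rfl

lemma integral_gaussianReal_eq (g : ℝ → ℝ) :
    ∫ z, g z ∂(gaussianReal 0 1) = ∫ z, gpdf z * g z := by
  rw [gaussianReal_eq_withDensity,
    integral_withDensity_eq_integral_smul ((measurable_gaussianPDFReal 0 1).real_toNNReal) g]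
  refine integral_congr_ae (ae_of_all _ fun z => ?_)
  show (gaussianPDFReal 0 1 z).toNNReal • g z = gpdf z * g z
  rw [NNReal.smul_def, Real.coe_toNNReal _ (gaussianPDFReal_nonneg 0 1 z), gpdf_eq, smul_eq_mul]

lemma integrable_gaussianReal_iff {g : ℝ → ℝ} :
    Integrable g (gaussianReal 0 1) ↔ Integrable (fun z => gpdf z * g z) := by
  rw [gaussianReal_eq_withDensity,
    integrable_withDensity_iff_integrable_smul ((measurable_gaussianPDFReal 0 1).real_toNNReal)]
  refine integrable_congr (ae_of_all _ fun z => ?_)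
  show (gaussianPDFReal 0 1 z).toNNReal • g z = gpdf z * g z
  rw [NNReal.smul_def, Real.coe_toNNReal _ (gaussianPDFReal_nonneg 0 1 z), gpdf_eq, smul_eq_mul]

lemma bs_integral' {v κ x : ℝ} (hv : 0 < v) (hκ : 0 < κ) (hx : 0 < x) :
    ∫ z, max (x * Real.exp (v*z - v^2/2) - κ) 0 ∂(gaussianReal 0 1) =
      x * Phi (Real.log (x/κ)/v + v/2) - κ * Phi (Real.log (x/κ)/v - v/2) := by
  rw [integral_gaussianReal_eq]
  exact bs_integral hv hκ hx

lemma exp_integrable_gaussian {v : ℝ} :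
    Integrable (fun z => Real.exp (v*z - v^2/2)) (gaussianReal 0 1) := by
  rw [integrable_gaussianReal_iff]
  simp_rw [gpdf_shift]
  exact integrable_gpdf_shift v

end Aux

open MeasureTheory Real

/-- Conditional Black–Scholes formula for the forward price: if `Z` is a standard Gaussian
random variable independent of the sub-σ-algebra `m`, `v, κ > 0`, `X > 0` is integrable and
`m`-measurable, and `XT = X·exp(v·Z − v²/2)`, then
`E[max(XT − κ, 0) | m] = X·Φ(log(X/κ)/v + v/2) − κ·Φ(log(X/κ)/v − v/2)` a.s. -/
theorem conditional_black_scholes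
    {Ω : Type*} {m : MeasurableSpace Ω} [MeasurableSpace Ω]
    (hm : m ≤ (inferInstance : MeasurableSpace Ω))
    (P : Measure Ω) [IsProbabilityMeasure P]
    (Z : Ω → ℝ) (hZmeas : Measurable Z)
    (hZlaw : P.map Z = ProbabilityTheory.gaussianReal 0 1)
    (hindep : ProbabilityTheory.Indep (MeasurableSpace.comap Z inferInstance) m P)
    {v κ : ℝ} (hv : 0 < v) (hκ : 0 < κ)
    (X : Ω → ℝ) (hXpos : ∀ ω, 0 < X ω) (hXint : Integrable X P)
    (hXmeas : StronglyMeasurable[m] X)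
    (XT : Ω → ℝ) (hXT : XT = fun ω => X ω * Real.exp (v * Z ω - v^2/2)) :
    P[fun ω => max (XT ω - κ) 0|m]
      =ᵐ[P] fun ω => X ω * Phi (Real.log (X ω / κ) / v + v / 2)
                      - κ * Phi (Real.log (X ω / κ) / v - v / 2) := by
  open Set ProbabilityTheory in
  -- ambient measurability of X
  have hXm0 : Measurable X := hXmeas.measurable.mono hm le_rfl
  -- the exponential factor
  set E : Ω → ℝ := fun ω => Real.exp (v * Z ω - v^2/2) with hE
  have hEmeas : Measurable E := (Real.measurable_exp.comp ((hZmeas.const_mul v).sub_const _))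
  have hEint : Integrable E P := by
    have h1 : Integrable (fun z => Real.exp (v*z - v^2/2)) (P.map Z) := by
      rw [hZlaw]; exact exp_integrable_gaussian
    rw [integrable_map_measure
      ((by fun_prop : Continuous fun z : ℝ => Real.exp (v*z - v^2/2)).aestronglyMeasurable)
      hZmeas.aemeasurable] at h1
    exact h1
  -- independence of X and E
  have hindepXE : IndepFun X E P := by
    rw [IndepFun_iff_Indep]
    refine my_indep_mono hindep.symm hXmeas.measurable.comap_le ?_
    rintro _ ⟨t, ht, rfl⟩
    exact ⟨(fun x : ℝ => Real.exp (v * x - v^2/2)) ⁻¹' t,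
      (by fun_prop : Measurable fun x : ℝ => Real.exp (v * x - v^2/2)) ht, rfl⟩
  have hXTmeas : Measurable XT := by rw [hXT]; exact hXm0.mul hEmeas
  have hXTint : Integrable XT P := by
    have := hindepXE.integrable_mul hXint hEint
    rwa [hXT]
  have hXTpos : ∀ ω, 0 < XT ω := by
    intro ω; rw [hXT]; exact mul_pos (hXpos ω) (Real.exp_pos _)
  -- integrability of the payoff
  have hMaxint : Integrable (fun ω => max (XT ω - κ) 0) P := by
    refine hXTint.mono ((hXTmeas.sub_const κ).max measurable_const).aestronglyMeasurable
      (ae_of_all _ fun ω => ?_)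
    have h1 := hXTpos ω
    rw [Real.norm_eq_abs, Real.norm_eq_abs, abs_of_nonneg (le_max_right _ _),
      abs_of_pos h1]
    exact max_le (by linarith) h1.le
  -- the candidate conditional expectation
  set friem : ℝ → ℝ := fun x => x * Phi (Real.log (x / κ) / v + v / 2)
      - κ * Phi (Real.log (x / κ) / v - v / 2) with hfr
  have hfrmeas : Measurable friem := by
    refine (measurable_id.mul (measurable_Phi.comp ?_)).sub
      (measurable_const.mul (measurable_Phi.comp ?_))
    · exact ((Real.measurable_log.comp (measurable_id.div_const κ)).div_const v).add_const _
    · exact ((Real.measurable_log.comp (measurable_id.div_const κ)).div_const v).sub_const _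
  have hgmeasm : Measurable[m] (fun ω => friem (X ω)) := hfrmeas.comp hXmeas.measurable
  have hgint : Integrable (fun ω => friem (X ω)) P := by
    refine (hXint.add (integrable_const κ)).mono
      (hfrmeas.comp hXm0).aestronglyMeasurable (ae_of_all _ fun ω => ?_)
    have hx := hXpos ω
    have h1 := Phi_nonneg (Real.log (X ω / κ) / v + v / 2)
    have h2 := Phi_le_one (Real.log (X ω / κ) / v + v / 2)
    have h3 := Phi_nonneg (Real.log (X ω / κ) / v - v / 2)
    have h4 := Phi_le_one (Real.log (X ω / κ) / v - v / 2)
    simp only [Pi.add_apply, Real.norm_eq_abs, hfr]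
    rw [abs_of_pos (by positivity : (0:ℝ) < X ω + κ), abs_sub_le_iff]
    constructor <;> nlinarith
  haveI : IsProbabilityMeasure (P.map Z) := by rw [hZlaw]; infer_instance
  -- key set-integral identity
  have hkey : ∀ s : Set Ω, MeasurableSet[m] s →
      ∫ ω in s, friem (X ω) ∂P = ∫ ω in s, max (XT ω - κ) 0 ∂P := by
    intro s hs
    set Y : Ω → ℝ × ℝ := fun ω => (X ω, s.indicator (fun _ => (1:ℝ)) ω) with hY
    have hYm : Measurable[m] Y := hXmeas.measurable.prodMk (measurable_const.indicator hs)
    have hY0 : Measurable Y := hYm.mono hm le_rfl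
    have hindepYZ : IndepFun Y Z P := by
      rw [IndepFun_iff_Indep]
      exact my_indep_mono hindep.symm hYm.comap_le le_rfl
    set F : (ℝ × ℝ) × ℝ → ℝ :=
      fun p => p.1.2 * max (p.1.1 * Real.exp (v * p.2 - v^2/2) - κ) 0 with hF
    have hFcont : Continuous F := by
      apply Continuous.mul
      · exact (continuous_snd.comp continuous_fst)
      · exact ((((continuous_fst.comp continuous_fst).mul
          (Real.continuous_exp.comp ((continuous_const.mul continuous_snd).sub
            continuous_const))).sub continuous_const).max continuous_const)
    have hFsm : StronglyMeasurable F := hFcont.stronglyMeasurable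
    have hcomp : ∀ ω, F (Y ω, Z ω) = s.indicator (fun ω => max (XT ω - κ) 0) ω := by
      intro ω
      by_cases hω : ω ∈ s
      · simp [hF, hY, indicator_of_mem hω, hXT]
      · simp [hF, hY, indicator_of_notMem hω]
    have hpair : AEMeasurable (fun ω => (Y ω, Z ω)) P := (hY0.prodMk hZmeas).aemeasurable
    have hFintP : Integrable (fun ω => F (Y ω, Z ω)) P := by
      simp_rw [hcomp]
      exact hMaxint.indicator (hm s hs)
    have hFintmap : Integrable F (P.map (fun ω => (Y ω, Z ω))) := by
      rw [integrable_map_measure hFsm.aestronglyMeasurable hpair]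
      exact hFintP
    have hmapeq : P.map (fun ω => (Y ω, Z ω)) = (P.map Y).prod (P.map Z) :=
      (indepFun_iff_map_prod_eq_prod_map_map hY0.aemeasurable hZmeas.aemeasurable).mp hindepYZ
    set G : ℝ × ℝ → ℝ := fun y => ∫ z, F (y, z) ∂(P.map Z) with hG
    have hGsm : StronglyMeasurable G := hFsm.integral_prod_right'
    have hGval : ∀ ω, G (Y ω) = s.indicator (fun ω => friem (X ω)) ω := by
      intro ω
      have h0 : G (Y ω) = s.indicator (fun _ => (1:ℝ)) ω *
          ∫ z, max (X ω * Real.exp (v * z - v^2/2) - κ) 0 ∂(P.map Z) := by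
        rw [hG, hY]
        exact integral_const_mul _ _
      rw [h0, hZlaw, bs_integral' hv hκ (hXpos ω)]
      by_cases hω : ω ∈ s
      · simp [indicator_of_mem hω, hfr]
      · simp [indicator_of_notMem hω]
    calc ∫ ω in s, friem (X ω) ∂P
        = ∫ ω, s.indicator (fun ω => friem (X ω)) ω ∂P := (integral_indicator (hm s hs)).symm
      _ = ∫ ω, G (Y ω) ∂P := by simp_rw [hGval]
      _ = ∫ y, G y ∂(P.map Y) := (integral_map hY0.aemeasurable hGsm.aestronglyMeasurable).symm
      _ = ∫ p, F p ∂((P.map Y).prod (P.map Z)) := (integral_prod F (hmapeq ▸ hFintmap)).symm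
      _ = ∫ p, F p ∂(P.map (fun ω => (Y ω, Z ω))) := by rw [hmapeq]
      _ = ∫ ω, F (Y ω, Z ω) ∂P := integral_map hpair hFsm.aestronglyMeasurable
      _ = ∫ ω, s.indicator (fun ω => max (XT ω - κ) 0) ω ∂P := by simp_rw [hcomp]
      _ = ∫ ω in s, max (XT ω - κ) 0 ∂P := integral_indicator (hm s hs)
  -- conclude via uniqueness of the conditional expectation
  exact (ae_eq_condExp_of_forall_setIntegral_eq hm hMaxint
    (fun s _ _ => hgint.integrableOn)
    (fun s hs _ => hkey s hs)
    (hgmeasm.stronglyMeasurable.aestronglyMeasurable )).symm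
end

section
/- Delta of the Black–Scholes–Margrabe price: fix κ > 0 and v > 0, and define C : (0, ∞) → ℝ by C(x) = x·Φ⁰₊(κ, v, x) − κ·Φ⁰₋(κ, v, x). Then for every x > 0, C is differentiable at x with derivative C′(x) = Φ⁰₊(κ, v, x); that is, the function x ↦ x·Φ(log(x/κ)/v + v/2) − κ·Φ(log(x/κ)/v − v/2) has derivative Φ(log(x/κ)/v + v/2) at every x > 0. -/
open MeasureTheory Real

/-!
Write `d = log (x / κ) / v`. Differentiating `x Φ(d + v/2) − κ Φ(d − v/2)` by the product and
chain rules gives `Φ(d + v/2)` plus `(x φ(d + v/2) − κ φ(d − v/2)) / (x v)`, and the bracket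
vanishes because the standard normal density `φ` satisfies
`φ(d + v/2) / φ(d − v/2) = exp (−d v) = κ / x`.
-/

theorem hasDerivAt_integral_Iic {E : Type*} [NormedAddCommGroup E] [NormedSpace ℝ E]
    [CompleteSpace E] {f : ℝ → E} (hf : Integrable f) {x : ℝ} (hfx : ContinuousAt f x) :
    HasDerivAt (fun y => ∫ z in Set.Iic y, f z) (f x) x := by
  have h_split : ∀ y, ∫ z in Set.Iic y, f z = (∫ z in Set.Iic 0, f z) + ∫ z in (0 : ℝ)..y, f z :=
    fun y => by
      rw [← intervalIntegral.integral_Iic_sub_Iic hf.integrableOn hf.integrableOn]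
      abel
  rw [funext h_split]
  exact (intervalIntegral.integral_hasDerivAt_right hf.intervalIntegrable
    hf.aestronglyMeasurable.stronglyMeasurableAtFilter hfx).const_add _

noncomputable def stdNormalDensity (z : ℝ) : ℝ := exp (-z ^ 2 / 2) / √(2 * π)

theorem integrable_stdNormalDensity : Integrable stdNormalDensity := by
  have h := (integrable_exp_neg_mul_sq (b := 1 / 2) (by norm_num)).div_const √(2 * π)
  convert h using 2 with z
  rw [stdNormalDensity]
  ring_nf

theorem hasDerivAt_Phi (x : ℝ) : HasDerivAt Phi (stdNormalDensity x) x :=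
  hasDerivAt_integral_Iic integrable_stdNormalDensity
    (by unfold stdNormalDensity; fun_prop)

theorem stdNormalDensity_add_half (d v : ℝ) :
    stdNormalDensity (d + v / 2) = exp (-(d * v)) * stdNormalDensity (d - v / 2) := by
  rw [stdNormalDensity, stdNormalDensity, ← mul_div_assoc, ← exp_add]
  ring_nf

theorem mul_stdNormalDensity_log_div_add_half {x κ : ℝ} (hx : 0 < x) (hκ : 0 < κ) {v : ℝ}
    (hv : v ≠ 0) :
    x * stdNormalDensity (log (x / κ) / v + v / 2)
      = κ * stdNormalDensity (log (x / κ) / v - v / 2) := by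
  rw [stdNormalDensity_add_half, div_mul_cancel₀ _ hv, exp_neg, exp_log (div_pos hx hκ)]
  field_simp

theorem hasDerivAt_log_div_div {κ v x : ℝ} (hκ : κ ≠ 0) (hx : x ≠ 0) :
    HasDerivAt (fun y => log (y / κ) / v) (1 / (x * v)) x := by
  have h := (((hasDerivAt_id x).div_const κ).log (div_ne_zero hx hκ)).div_const v
  refine h.congr_deriv ?_
  simp only [id]
  field_simp

/-- Delta of the Black–Scholes–Margrabe price: for `κ, v > 0`, the function
`x ↦ x·Φ(log(x/κ)/v + v/2) − κ·Φ(log(x/κ)/v − v/2)` is differentiable at every `x > 0`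
with derivative `Φ(log(x/κ)/v + v/2)`. -/
theorem black_scholes_margrabe_delta {κ v : ℝ} (hκ : 0 < κ) (hv : 0 < v)
    {x : ℝ} (hx : 0 < x) :
    HasDerivAt
      (fun y => y * Phi (Real.log (y / κ) / v + v / 2)
                 - κ * Phi (Real.log (y / κ) / v - v / 2))
      (Phi (Real.log (x / κ) / v + v / 2)) x := by
  have hd := hasDerivAt_log_div_div (v := v) hκ.ne' hx.ne'
  have hplus := (hasDerivAt_Phi _).comp x (hd.add_const (v / 2))
  have hminus := (hasDerivAt_Phi _).comp x (hd.sub_const (v / 2))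
  have hcancel := mul_stdNormalDensity_log_div_add_half hx hκ hv.ne'
  refine (((hasDerivAt_id x).mul hplus).sub (hminus.const_mul κ)).congr_deriv ?_
  simp only [id, Function.comp_apply]
  linear_combination (1 / (x * v)) * hcancel
end

section
/- Conditional Fubini theorem for conditional expectations: let (Ω, 𝓕, P) be a probability space, 𝓖 ⊆ 𝓕 a sub-σ-algebra, and (Y, 𝒴, μ) a finite measure space. Let F : Y × Ω → ℝ be jointly measurable with ∫_Y ∫_Ω |F(y, ω)| dP(ω) dμ(y) < ∞. Suppose G : Y × Ω → ℝ is jointly measurable and for μ-almost every y ∈ Y, G(y, ·) is a version of the conditional expectation E[F(y, ·) | 𝓖]. Then the random variable ω ↦ ∫_Y G(y, ω) dμ(y) is a version of E[∫_Y F(y, ·) dμ(y) | 𝓖]; i.e., ∫_Y E[F(y, ·) | 𝓖] dμ(y) = E[∫_Y F(y, ·) dμ(y) | 𝓖] P-almost surely. -/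
open MeasureTheory

/-- Key duality identity: for an integrable `u`, the integral of `P[u|m]` over an arbitrary
measurable set `s` equals the integral of `u` against `P[1_s|m]`. -/
lemma condexp_setIntegral_eq_integral_mul_condexp_indicator
    {Ω : Type*} {m : MeasurableSpace Ω} [MeasurableSpace Ω]
    (hm : m ≤ (inferInstance : MeasurableSpace Ω))
    (P : Measure Ω) [IsProbabilityMeasure P]
    {u : Ω → ℝ} (hu : Integrable u P) {s : Set Ω} (hs : MeasurableSet s) :
    ∫ ω in s, (P[u|m]) ω ∂P
      = ∫ ω, u ω * (P[s.indicator (fun _ => (1:ℝ))|m]) ω ∂P := by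
  set Z : Ω → ℝ := P[s.indicator (fun _ => (1:ℝ))|m] with hZdef
  have hind : Integrable (s.indicator (fun _ => (1:ℝ))) P :=
    (integrable_const (1:ℝ)).indicator hs
  have hZm : StronglyMeasurable[m] Z := stronglyMeasurable_condExp
  have hZb : ∀ᵐ ω ∂P, |Z ω| ≤ ((1:NNReal):ℝ) :=
    ae_bdd_condExp_of_ae_bdd (Filter.Eventually.of_forall fun ω => by
      by_cases h : ω ∈ s <;> simp [Set.indicator_apply, h])
  have e1 : ∫ ω in s, (P[u|m]) ω ∂P = ∫ ω, (P[u|m]) ω * Z ω ∂P := by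
    have hmul : ((P[u|m]) * s.indicator (fun _ => (1:ℝ))) = s.indicator (P[u|m]) := by
      funext ω; by_cases h : ω ∈ s <;> simp [Set.indicator_apply, h]
    have hint : Integrable ((P[u|m]) * s.indicator (fun _ => (1:ℝ))) P := by
      rw [hmul]; exact integrable_condExp.indicator hs
    calc ∫ ω in s, (P[u|m]) ω ∂P
        = ∫ ω, ((P[u|m]) * s.indicator (fun _ => (1:ℝ))) ω ∂P := by
          rw [hmul, integral_indicator hs]
      _ = ∫ ω, (P[(P[u|m]) * s.indicator (fun _ => (1:ℝ))|m]) ω ∂P :=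
          (integral_condExp hm).symm
      _ = ∫ ω, ((P[u|m]) * Z) ω ∂P := integral_congr_ae
          (condExp_mul_of_stronglyMeasurable_left stronglyMeasurable_condExp hint hind)
      _ = ∫ ω, (P[u|m]) ω * Z ω ∂P := rfl
  have e2 : ∫ ω, u ω * Z ω ∂P = ∫ ω, (P[u|m]) ω * Z ω ∂P := by
    have hint : Integrable (Z * u) P := by
      have := hu.bdd_mul (c := 1) ((hZm.mono hm).aestronglyMeasurable)
        (by simpa [Real.norm_eq_abs] using hZb)
      exact this
    calc ∫ ω, u ω * Z ω ∂P
        = ∫ ω, (Z * u) ω ∂P := by simp only [Pi.mul_apply, mul_comm]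
      _ = ∫ ω, (P[Z * u|m]) ω ∂P := (integral_condExp hm).symm
      _ = ∫ ω, (Z * (P[u|m])) ω ∂P := integral_congr_ae
          (condExp_mul_of_stronglyMeasurable_left hZm hint hu)
      _ = ∫ ω, (P[u|m]) ω * Z ω ∂P := by simp only [Pi.mul_apply, mul_comm]
  rw [e1, ← e2]

/-- Conditional Fubini theorem: if `F : Y × Ω → ℝ` is jointly measurable and integrable
with respect to `μ ⊗ P` (equivalently `∫_Y ∫_Ω |F| dP dμ < ∞`), and `G` is a jointly
measurable version of `y ↦ E[F(y, ·) | m]`, then `ω ↦ ∫_Y G(y, ω) dμ(y)` is a version of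
`E[∫_Y F(y, ·) dμ(y) | m]`. -/
theorem conditional_fubini
    {Ω : Type*} {m : MeasurableSpace Ω} [MeasurableSpace Ω]
    (hm : m ≤ (inferInstance : MeasurableSpace Ω))
    (P : Measure Ω) [IsProbabilityMeasure P]
    {Y : Type*} [MeasurableSpace Y] (μ : Measure Y) [IsFiniteMeasure μ]
    (F G : Y → Ω → ℝ)
    (hFmeas : StronglyMeasurable (Function.uncurry F))
    (hFint : Integrable (Function.uncurry F) (μ.prod P))
    (hGmeas : StronglyMeasurable (Function.uncurry G))
    (hGF : ∀ᵐ y ∂μ, G y =ᵐ[P] P[F y|m]) :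
    (fun ω => ∫ y, G y ω ∂μ) =ᵐ[P] P[fun ω => ∫ y, F y ω ∂μ|m] := by
  -- integrability of slices
  have hFy : ∀ᵐ y ∂μ, Integrable (F y) P := hFint.prod_right_ae
  have hGy : ∀ᵐ y ∂μ, Integrable (G y) P := by
    filter_upwards [hGF] with y hy
    exact integrable_condExp.congr hy.symm
  -- joint integrability of G
  have hFnorm : Integrable (fun y => ∫ ω, ‖Function.uncurry F (y, ω)‖ ∂P) μ :=
    ((integrable_prod_iff hFmeas.aestronglyMeasurable).mp hFint).2
  have hGint : Integrable (Function.uncurry G) (μ.prod P) := by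
    rw [integrable_prod_iff hGmeas.aestronglyMeasurable]
    refine ⟨hGy, ?_⟩
    refine Integrable.mono' hFnorm hGmeas.norm.integral_prod_right'.aestronglyMeasurable ?_
    filter_upwards [hGF, hFy] with y hy hyi
    rw [Real.norm_eq_abs, abs_of_nonneg (integral_nonneg fun ω => norm_nonneg _)]
    calc ∫ ω, ‖Function.uncurry G (y, ω)‖ ∂P
        = ∫ ω, |(P[F y|m]) ω| ∂P := integral_congr_ae (hy.mono fun ω h => by
          simp [Function.uncurry, h, Real.norm_eq_abs])
      _ ≤ ∫ ω, |F y ω| ∂P := integral_abs_condExp_le _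
      _ = ∫ ω, ‖Function.uncurry F (y, ω)‖ ∂P := by simp [Function.uncurry, Real.norm_eq_abs]
  have hg_int : Integrable (fun ω => ∫ y, G y ω ∂μ) P := by
    have := hGint.swap.integral_prod_left
    simpa [Function.comp, Function.uncurry] using this
  have hf_int : Integrable (fun ω => ∫ y, F y ω ∂μ) P := by
    have := hFint.swap.integral_prod_left
    simpa [Function.comp, Function.uncurry] using this
  -- it suffices to check set integrals against every measurable set
  refine Integrable.ae_eq_of_forall_setIntegral_eq _ _ hg_int integrable_condExp
    fun s hs _ => ?_
  set Z : Ω → ℝ := P[s.indicator (fun _ => (1:ℝ))|m] with hZdef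
  have hZm : StronglyMeasurable[m] Z := stronglyMeasurable_condExp
  have hZb : ∀ᵐ ω ∂P, |Z ω| ≤ ((1:NNReal):ℝ) :=
    ae_bdd_condExp_of_ae_bdd (Filter.Eventually.of_forall fun ω => by
      by_cases h : ω ∈ s <;> simp [Set.indicator_apply, h])
  -- key pointwise-in-y identity
  have key : ∀ᵐ y ∂μ, ∫ ω in s, G y ω ∂P = ∫ ω, F y ω * Z ω ∂P := by
    filter_upwards [hGF, hFy] with y hy hyi
    calc ∫ ω in s, G y ω ∂P
        = ∫ ω in s, (P[F y|m]) ω ∂P :=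
          integral_congr_ae (ae_restrict_of_ae (hy.mono fun ω h => h))
      _ = ∫ ω, F y ω * Z ω ∂P :=
          condexp_setIntegral_eq_integral_mul_condexp_indicator hm P hyi hs
  -- Fubini for G over the restricted measure
  have hGint_s : Integrable (Function.uncurry fun ω y => G y ω) ((P.restrict s).prod μ) := by
    have h1 : Integrable (Function.uncurry G ∘ Prod.swap) (P.prod μ) := hGint.swap
    have h2 : (P.restrict s).prod μ = (P.prod μ).restrict (s ×ˢ Set.univ) := by
      rw [← Measure.prod_restrict, Measure.restrict_univ]
    have h3 : Integrable (Function.uncurry G ∘ Prod.swap) ((P.restrict s).prod μ) := by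
      rw [h2]; exact h1.restrict
    exact h3
  have step1 : ∫ ω in s, (∫ y, G y ω ∂μ) ∂P = ∫ y, ∫ ω in s, G y ω ∂P ∂μ :=
    integral_integral_swap hGint_s
  -- joint integrability of (y, ω) ↦ F y ω * Z ω
  have hZb_prod : ∀ᵐ z ∂(μ.prod P), ‖Z z.2‖ ≤ 1 :=
    (Measure.quasiMeasurePreserving_snd (μ := μ) (ν := P)).ae
      (by simpa [Real.norm_eq_abs] using hZb)
  have hFZ_int : Integrable (Function.uncurry fun y ω => F y ω * Z ω) (μ.prod P) := by
    have h1 : Integrable (fun z : Y × Ω => Z z.2 * Function.uncurry F z) (μ.prod P) :=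
      hFint.bdd_mul (c := 1)
        (((hZm.mono hm).comp_measurable measurable_snd).aestronglyMeasurable) hZb_prod
    have h2 : (Function.uncurry fun y ω => F y ω * Z ω)
        = fun z : Y × Ω => Z z.2 * Function.uncurry F z := by
      funext z; simp [Function.uncurry, mul_comm]
    rw [h2]; exact h1
  have step2 : ∫ y, ∫ ω, F y ω * Z ω ∂P ∂μ = ∫ ω, ∫ y, F y ω * Z ω ∂μ ∂P :=
    integral_integral_swap hFZ_int
  have step3 : ∫ ω, ∫ y, F y ω * Z ω ∂μ ∂P = ∫ ω, (∫ y, F y ω ∂μ) * Z ω ∂P := by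
    congr 1; funext ω; exact integral_mul_const _ _
  calc ∫ ω in s, (∫ y, G y ω ∂μ) ∂P
      = ∫ y, ∫ ω in s, G y ω ∂P ∂μ := step1
    _ = ∫ y, ∫ ω, F y ω * Z ω ∂P ∂μ := integral_congr_ae key
    _ = ∫ ω, (∫ y, F y ω ∂μ) * Z ω ∂P := by rw [step2, step3]
    _ = ∫ ω in s, (P[fun ω => ∫ y, F y ω ∂μ|m]) ω ∂P :=
        (condexp_setIntegral_eq_integral_mul_condexp_indicator hm P hf_int hs).symm
end

section
/- Replication identity for the exchange-option hedge: let (Ω, 𝓕, Q) be a probability space, 𝓖 ⊆ 𝓕 a sub-σ-algebra, T > 0, μ a finite signed measure and ν a finite (positive) measure, both supported on [T, ∞), and κ > 0. Let F : [T, ∞) × Ω → ℝ be jointly measurable and nonnegative with ∫ F(y, ·) ν(dy) = 1 Q-almost surely, set Ξ := ∫ F(y, ·) μ(dy), and assume the integrability needed to interchange integration against μ and ν with conditional expectation via jointly measurable versions. Then, Q-almost surely, ∫ E[1_{{Ξ > κ}}·F(y, ·) | 𝓖] μ(dy) − κ·∫ E[1_{{Ξ > κ}}·F(y, ·) | 𝓖]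 ν(dy) = E[max(Ξ − κ, 0) | 𝓖]; that is, the portfolio φ_t(dy) = E[1_{{P̂_T(μ) > κ}}·(P̂_T(y)/P̂_t(y)) | 𝓖]·(μ(dy) − κ·ν(dy)) satisfies ∫ P_t(y) φ_t(dy) = P_t(ν)·E[(P̂_T(μ) − κ·P̂_T(ν))⁺ | 𝓖], the price of the exchange option with payoff (P_T(μ) − κ·P_T(ν))⁺. -/
open MeasureTheory

section Aux

variable {Ω : Type*} [MeasurableSpace Ω]

private lemma aux_ind_mul (s : Set Ω) (h : Ω → ℝ) :
    (fun ω => s.indicator (fun _ => (1:ℝ)) ω * h ω) = s.indicator h := by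
  funext ω
  by_cases hω : ω ∈ s <;> simp [hω]

/-- Fubini swap with a bounded weight. -/
private lemma aux_swap (Q : Measure Ω) [IsProbabilityMeasure Q]
    (ρ : Measure ℝ) [IsFiniteMeasure ρ]
    {g : ℝ → Ω → ℝ}
    (hgi : Integrable (Function.uncurry g) (ρ.prod Q))
    {w : Ω → ℝ} (hw : AEStronglyMeasurable w Q) (hbd : ∀ ω, ‖w ω‖ ≤ 1) :
    ∫ ω, w ω * ∫ y, g y ω ∂ρ ∂Q = ∫ y, ∫ ω, w ω * g y ω ∂Q ∂ρ := by
  have hi : Integrable (Function.uncurry fun (ω : Ω) (y : ℝ) => w ω * g y ω) (Q.prod ρ) := by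
    have h1 : Integrable (Function.uncurry g ∘ Prod.swap) (Q.prod ρ) := hgi.swap
    exact h1.bdd_mul hw.comp_fst (Filter.Eventually.of_forall fun p => hbd p.1)
  calc ∫ ω, w ω * ∫ y, g y ω ∂ρ ∂Q
      = ∫ ω, ∫ y, w ω * g y ω ∂ρ ∂Q := by
        refine integral_congr_ae (Filter.Eventually.of_forall fun ω => ?_)
        show w ω * ∫ y, g y ω ∂ρ = ∫ y, w ω * g y ω ∂ρ
        rw [integral_const_mul]
    _ = ∫ y, ∫ ω, w ω * g y ω ∂Q ∂ρ := integral_integral_swap hi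

end Aux

section Aux

/-- Pull-out lemma: integrating an `m`-measurable integrable function against an indicator
is the same as integrating it against the conditional expectation of the indicator. -/
private lemma aux_pullout {Ω : Type*} {m : MeasurableSpace Ω} [MeasurableSpace Ω] (hm : m ≤ (inferInstance : MeasurableSpace Ω))
    (Q : Measure Ω) [IsProbabilityMeasure Q]
    {s : Set Ω} (hs : MeasurableSet s) {h : Ω → ℝ}
    (hhm : StronglyMeasurable[m] h) (hhi : Integrable h Q) :
    ∫ ω, s.indicator (fun _ => (1:ℝ)) ω * h ω ∂Q
      = ∫ ω, (Q[s.indicator (fun _ => (1:ℝ))|m]) ω * h ω ∂Q := by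
  haveI : IsFiniteMeasure (Q.trim hm) := isFiniteMeasure_trim hm
  have hind : Integrable (s.indicator fun _ => (1:ℝ)) Q := (integrable_const (1:ℝ)).indicator hs
  have hindb : ∀ ω, ‖s.indicator (fun _ => (1:ℝ)) ω‖ ≤ 1 := by
    intro ω; by_cases hω : ω ∈ s <;> simp [hω]
  have hprod : Integrable (h * s.indicator fun _ => (1:ℝ)) Q := by
    have h1 : Integrable (fun ω => s.indicator (fun _ => (1:ℝ)) ω * h ω) Q :=
      hhi.bdd_mul ((stronglyMeasurable_const.indicator hs).aestronglyMeasurable) (Filter.Eventually.of_forall hindb)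
    exact h1.congr (Filter.Eventually.of_forall fun ω => mul_comm _ _)
  have key : Q[h * s.indicator fun _ => (1:ℝ)|m]
      =ᵐ[Q] h * Q[s.indicator fun _ => (1:ℝ)|m] :=
    condExp_mul_of_stronglyMeasurable_left hhm hprod hind
  calc ∫ ω, s.indicator (fun _ => (1:ℝ)) ω * h ω ∂Q
      = ∫ ω, (h * s.indicator fun _ => (1:ℝ)) ω ∂Q := by
        refine integral_congr_ae (Filter.Eventually.of_forall fun ω => ?_)
        simp [mul_comm]
    _ = ∫ ω, (Q[h * s.indicator fun _ => (1:ℝ)|m]) ω ∂Q := (integral_condExp hm).symm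
    _ = ∫ ω, (h * Q[s.indicator fun _ => (1:ℝ)|m]) ω ∂Q := integral_congr_ae key
    _ = ∫ ω, (Q[s.indicator (fun _ => (1:ℝ))|m]) ω * h ω ∂Q := by
        refine integral_congr_ae (Filter.Eventually.of_forall fun ω => ?_)
        simp [mul_comm]

/-- Conditional expectation commutes with integration over a parameter, via a jointly
measurable version `G` of the conditional expectations. -/
private lemma aux_condexp_swap {Ω : Type*} {m : MeasurableSpace Ω} [MeasurableSpace Ω]
    (hm : m ≤ (inferInstance : MeasurableSpace Ω))
    (Q : Measure Ω) [IsProbabilityMeasure Q]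
    (ρ : Measure ℝ) [IsFiniteMeasure ρ] (f G : ℝ → Ω → ℝ)
    (hfi : Integrable (Function.uncurry f) (ρ.prod Q))
    (hGm : StronglyMeasurable (Function.uncurry G))
    (hG : ∀ᵐ y ∂ρ, G y =ᵐ[Q] Q[f y|m]) :
    (fun ω => ∫ y, G y ω ∂ρ) =ᵐ[Q] Q[fun ω => ∫ y, f y ω ∂ρ|m] := by
  haveI : IsFiniteMeasure (Q.trim hm) := isFiniteMeasure_trim hm
  have hf_slice : ∀ᵐ y ∂ρ, Integrable (f y) Q := hfi.prod_right_ae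
  -- integrability of `uncurry G`
  have hG_slice : ∀ᵐ y ∂ρ, Integrable (G y) Q := by
    filter_upwards [hG] with y hy
    exact integrable_condExp.congr hy.symm
  have hGi : Integrable (Function.uncurry G) (ρ.prod Q) := by
    refine (integrable_prod_iff hGm.aestronglyMeasurable).mpr ⟨hG_slice, ?_⟩
    have hnsm : StronglyMeasurable (Function.uncurry fun (y : ℝ) (ω : Ω) => ‖G y ω‖) :=
      hGm.norm
    refine Integrable.mono' hfi.integral_norm_prod_left
      ((hnsm.integral_prod_right (ν := Q)).aestronglyMeasurable) ?_
    filter_upwards [hG, hf_slice] with y hy hyi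
    rw [Real.norm_eq_abs, abs_of_nonneg (integral_nonneg fun _ => norm_nonneg _)]
    calc ∫ ω, ‖G y ω‖ ∂Q = ∫ ω, ‖(Q[f y|m]) ω‖ ∂Q := by
          refine integral_congr_ae (hy.mono fun ω hω => ?_)
          simp only [hω]
      _ ≤ ∫ ω, ‖f y ω‖ ∂Q := by
          simp only [Real.norm_eq_abs]
          exact integral_abs_condExp_le _
  set L : Ω → ℝ := fun ω => ∫ y, G y ω ∂ρ with hL
  set M : Ω → ℝ := fun ω => ∫ y, f y ω ∂ρ with hM
  have hLi : Integrable L Q := hGi.integral_prod_right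
  have hMi : Integrable M Q := hfi.integral_prod_right
  -- Step 1: for every measurable set `s`, re-express `∫_s L` through the conditional
  -- expectation of the indicator of `s`.
  have main : ∀ s : Set Ω, MeasurableSet s →
      ∫ ω in s, L ω ∂Q = ∫ ω, (Q[s.indicator (fun _ => (1:ℝ))|m]) ω * L ω ∂Q := by
    intro s hs
    set w : Ω → ℝ := s.indicator (fun _ => (1:ℝ)) with hw
    set e : Ω → ℝ := Q[w|m] with he
    have hwm : AEStronglyMeasurable w Q :=
      (stronglyMeasurable_const.indicator hs).aestronglyMeasurable
    have hwb : ∀ ω, ‖w ω‖ ≤ 1 := by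
      intro ω; by_cases hω : ω ∈ s <;> simp [hw, hω]
    -- a globally bounded `m`-measurable version of `e`
    set e' : Ω → ℝ := fun ω => max 0 (min (e ω) 1) with he'
    have he'_sm : StronglyMeasurable[m] e' :=
      (measurable_const.max ((stronglyMeasurable_condExp.measurable).min
        measurable_const)).stronglyMeasurable
    have he'_bd : ∀ ω, ‖e' ω‖ ≤ 1 := by
      intro ω
      rw [Real.norm_eq_abs, abs_le]
      constructor
      · exact le_trans (by norm_num) (le_max_left _ _)
      · exact max_le (by norm_num) (min_le_right _ _)
    have he'_ae : e' =ᵐ[Q] e := by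
      have h0 : (0 : Ω → ℝ) ≤ᵐ[Q] e :=
        condExp_nonneg (Filter.Eventually.of_forall fun ω =>
          Set.indicator_nonneg (fun _ _ => zero_le_one) ω)
      have hι : Integrable w Q := (integrable_const (1:ℝ)).indicator hs
      have h1 : e ≤ᵐ[Q] fun _ => (1:ℝ) := by
        have := condExp_mono (μ := Q) (m := m) hι (integrable_const (1:ℝ))
          (Filter.Eventually.of_forall fun ω =>
            Set.indicator_le_self' (fun _ _ => zero_le_one) ω)
        rw [condExp_const hm (1:ℝ)] at this
        exact this
      filter_upwards [h0, h1] with ω hp hq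
      have hp' : (0:ℝ) ≤ e ω := hp
      have hq' : e ω ≤ 1 := hq
      show max 0 (min (e ω) 1) = e ω
      rw [min_eq_left hq', max_eq_right hp']
    have he'm_amb : AEStronglyMeasurable e' Q :=
      (he'_sm.mono hm).aestronglyMeasurable
    -- pull-out applied per slice
    have step1 : ∫ ω in s, L ω ∂Q = ∫ ω, e' ω * L ω ∂Q := by
      have h1 : ∫ ω in s, L ω ∂Q = ∫ ω, w ω * L ω ∂Q := by
        rw [← integral_indicator hs, ← aux_ind_mul s L]
      rw [h1, aux_swap Q ρ hGi hwm hwb]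
      have h2 : ∫ y, ∫ ω, w ω * G y ω ∂Q ∂ρ = ∫ y, ∫ ω, e' ω * G y ω ∂Q ∂ρ := by
        refine integral_congr_ae ?_
        filter_upwards [hG, hf_slice] with y hy hyi
        calc ∫ ω, w ω * G y ω ∂Q
            = ∫ ω, w ω * (Q[f y|m]) ω ∂Q := by
              refine integral_congr_ae (hy.mono fun ω hω => ?_)
              simp only [hω]
          _ = ∫ ω, e ω * (Q[f y|m]) ω ∂Q :=
              aux_pullout hm Q hs stronglyMeasurable_condExp integrable_condExp
          _ = ∫ ω, e' ω * (Q[f y|m]) ω ∂Q := by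
              refine integral_congr_ae (he'_ae.mono fun ω hω => ?_)
              simp only [hω]
          _ = ∫ ω, e' ω * G y ω ∂Q := by
              refine integral_congr_ae (hy.mono fun ω hω => ?_)
              simp only [hω]
      rw [h2, ← aux_swap Q ρ hGi he'm_amb he'_bd]
    -- replace `e'` by `e` and then by pull-out on the `L`-side
    rw [step1]
    refine integral_congr_ae (he'_ae.mono fun ω hω => ?_)
    simp only [hω]
  -- Step 2: conclude `L =ᵐ Q[L|m]`.
  have hLR : L =ᵐ[Q] Q[L|m] := by
    refine Integrable.ae_eq_of_forall_setIntegral_eq L (Q[L|m]) hLi integrable_condExp ?_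
    intro s hs _
    have h1 := main s hs
    have h2 : ∫ ω in s, (Q[L|m]) ω ∂Q
        = ∫ ω, (Q[s.indicator (fun _ => (1:ℝ))|m]) ω * (Q[L|m]) ω ∂Q := by
      rw [← integral_indicator hs, ← aux_ind_mul s (Q[L|m])]
      exact aux_pullout hm Q hs stronglyMeasurable_condExp integrable_condExp
    rw [h1, h2]
    -- ∫ e * L = ∫ e * Q[L|m] with e := Q[ind_s|m]
    set e : Ω → ℝ := Q[s.indicator (fun _ => (1:ℝ))|m] with he
    -- bound e a.e. and truncate
    set e' : Ω → ℝ := fun ω => max 0 (min (e ω) 1) with he'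
    have he'_sm : StronglyMeasurable[m] e' :=
      (measurable_const.max ((stronglyMeasurable_condExp.measurable).min
        measurable_const)).stronglyMeasurable
    have he'_bd : ∀ ω, ‖e' ω‖ ≤ 1 := by
      intro ω
      rw [Real.norm_eq_abs, abs_le]
      exact ⟨le_trans (by norm_num) (le_max_left _ _),
        max_le (by norm_num) (min_le_right _ _)⟩
    have he'_ae : e' =ᵐ[Q] e := by
      have h0 : (0 : Ω → ℝ) ≤ᵐ[Q] e :=
        condExp_nonneg (Filter.Eventually.of_forall fun ω =>
          Set.indicator_nonneg (fun _ _ => zero_le_one) ω)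
      have hι : Integrable (s.indicator fun _ => (1:ℝ)) Q :=
        (integrable_const (1:ℝ)).indicator hs
      have h1 : e ≤ᵐ[Q] fun _ => (1:ℝ) := by
        have := condExp_mono (μ := Q) (m := m) hι (integrable_const (1:ℝ))
          (Filter.Eventually.of_forall fun ω =>
            Set.indicator_le_self' (fun _ _ => zero_le_one) ω)
        rw [condExp_const hm (1:ℝ)] at this
        exact this
      filter_upwards [h0, h1] with ω hp hq
      have hp' : (0:ℝ) ≤ e ω := hp
      have hq' : e ω ≤ 1 := hq
      show max 0 (min (e ω) 1) = e ω
      rw [min_eq_left hq', max_eq_right hp']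
    have hconv : ∀ X : Ω → ℝ, ∫ ω, e ω * X ω ∂Q = ∫ ω, e' ω * X ω ∂Q := by
      intro X
      refine integral_congr_ae (he'_ae.mono fun ω hω => ?_)
      simp only [hω]
    rw [hconv L, hconv (Q[L|m])]
    -- now use the pull-out property with the bounded m-measurable e'
    have hp1 : Integrable (e' * L) Q := by
      have := hLi.bdd_mul ((he'_sm.mono hm).aestronglyMeasurable) (Filter.Eventually.of_forall he'_bd)
      exact this
    have key : Q[e' * L|m] =ᵐ[Q] e' * Q[L|m] :=
      condExp_mul_of_stronglyMeasurable_left he'_sm hp1 hLi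
    calc ∫ ω, e' ω * L ω ∂Q = ∫ ω, (e' * L) ω ∂Q := rfl
      _ = ∫ ω, (Q[e' * L|m]) ω ∂Q := (integral_condExp hm).symm
      _ = ∫ ω, (e' * Q[L|m]) ω ∂Q := integral_congr_ae key
      _ = ∫ ω, e' ω * (Q[L|m]) ω ∂Q := rfl
  -- Step 3: identify `Q[L|m]` with `Q[M|m]` using set integrals over `m`-measurable sets.
  refine ae_eq_condExp_of_forall_setIntegral_eq hm hMi
    (fun s _ _ => hLi.integrableOn) ?_
    (AEStronglyMeasurable.congr stronglyMeasurable_condExp.aestronglyMeasurable hLR.symm)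
  intro s hs _
  have hs' : MeasurableSet s := hm s hs
  set w : Ω → ℝ := s.indicator (fun _ => (1:ℝ)) with hw
  have hwm : AEStronglyMeasurable w Q :=
    (stronglyMeasurable_const.indicator hs').aestronglyMeasurable
  have hwb : ∀ ω, ‖w ω‖ ≤ 1 := by
    intro ω; by_cases hω : ω ∈ s <;> simp [hw, hω]
  have h1 : ∫ ω in s, L ω ∂Q = ∫ ω, w ω * L ω ∂Q := by
    rw [← integral_indicator hs', ← aux_ind_mul s L]
  have h2 : ∫ ω in s, M ω ∂Q = ∫ ω, w ω * M ω ∂Q := by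
    rw [← integral_indicator hs', ← aux_ind_mul s M]
  rw [h1, h2, aux_swap Q ρ hGi hwm hwb, aux_swap Q ρ hfi hwm hwb]
  refine integral_congr_ae ?_
  filter_upwards [hG, hf_slice] with y hy hyi
  calc ∫ ω, w ω * G y ω ∂Q
      = ∫ ω, w ω * (Q[f y|m]) ω ∂Q := by
        refine integral_congr_ae (hy.mono fun ω hω => ?_)
        simp only [hω]
    _ = ∫ ω in s, (Q[f y|m]) ω ∂Q := by
        rw [← integral_indicator hs', ← aux_ind_mul s (Q[f y|m])]
    _ = ∫ ω in s, f y ω ∂Q := setIntegral_condExp hm hyi hs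
    _ = ∫ ω, w ω * f y ω ∂Q := by
        rw [← integral_indicator hs', ← aux_ind_mul s (f y)]

end Aux

/-- Replication identity for the exchange-option hedge: with the finite signed measure
`μ = μp − μm` (Jordan decomposition) and the finite measure `ν`, both supported on
`[T, ∞)`, a jointly measurable nonnegative forward bond curve `F(y, ω) = P̂_T(y)(ω)` with
`∫ F(y, ·) ν(dy) = 1` a.s., the forward price `Ξ = ∫ F(y, ·) μ(dy)` and `κ > 0`, the
hedging portfolio of the exchange option replicates its price:
`∫ E[1_{Ξ>κ}·F(y,·) | m] μ(dy) − κ·∫ E[1_{Ξ>κ}·F(y,·) | m] ν(dy) = E[max(Ξ − κ, 0) | m]`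
a.s., the interchange of the maturity integrals with the conditional expectation being
expressed through a jointly measurable version `G`. -/
theorem exchange_option_replication
    {Ω : Type*} {m : MeasurableSpace Ω} [MeasurableSpace Ω]
    (hm : m ≤ (inferInstance : MeasurableSpace Ω))
    (Q : Measure Ω) [IsProbabilityMeasure Q]
    {T : ℝ} (hT : 0 < T) {κ : ℝ} (hκ : 0 < κ)
    (μp μm ν : Measure ℝ) [IsFiniteMeasure μp] [IsFiniteMeasure μm] [IsFiniteMeasure ν]
    (hμp : μp (Set.Iio T) = 0) (hμm : μm (Set.Iio T) = 0) (hν : ν (Set.Iio T) = 0)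
    (F : ℝ → Ω → ℝ) (hFmeas : StronglyMeasurable (Function.uncurry F))
    (hFpos : ∀ y ω, 0 ≤ F y ω)
    (hnorm : ∀ᵐ ω ∂Q, ∫ y, F y ω ∂ν = 1)
    (Ξ : Ω → ℝ) (hΞ : Ξ = fun ω => ∫ y, F y ω ∂μp - ∫ y, F y ω ∂μm)
    (hint1 : Integrable
      (fun p : ℝ × Ω => Set.indicator {ω | κ < Ξ ω} (fun _ => (1:ℝ)) p.2 * F p.1 p.2)
      (μp.prod Q))
    (hint2 : Integrable
      (fun p : ℝ × Ω => Set.indicator {ω | κ < Ξ ω} (fun _ => (1:ℝ)) p.2 * F p.1 p.2)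
      (μm.prod Q))
    (hint3 : Integrable
      (fun p : ℝ × Ω => Set.indicator {ω | κ < Ξ ω} (fun _ => (1:ℝ)) p.2 * F p.1 p.2)
      (ν.prod Q))
    (G : ℝ → Ω → ℝ)
    (hGmeas : StronglyMeasurable (Function.uncurry G))
    (hG : ∀ᵐ y ∂(μp + μm + ν), G y =ᵐ[Q]
      Q[fun ω => Set.indicator {ω' | κ < Ξ ω'} (fun _ => (1:ℝ)) ω * F y ω|m]) :
    (fun ω => (∫ y, G y ω ∂μp - ∫ y, G y ω ∂μm) - κ * ∫ y, G y ω ∂ν)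
      =ᵐ[Q] Q[fun ω => max (Ξ ω - κ) 0|m] := by
  classical
  set ind : Ω → ℝ := Set.indicator {ω | κ < Ξ ω} (fun _ => (1:ℝ)) with hind
  set f : ℝ → Ω → ℝ := fun y ω => ind ω * F y ω with hf
  -- restrict hG to each of the three measures
  have hle1 : μp ≤ μp + μm + ν := Measure.le_add_right (Measure.le_add_right le_rfl)
  have hle2 : μm ≤ μp + μm + ν := Measure.le_add_right (Measure.le_add_left le_rfl)
  have hle3 : ν ≤ μp + μm + ν := Measure.le_add_left le_rfl
  have hG1 : ∀ᵐ y ∂μp, G y =ᵐ[Q] Q[f y|m] := hG.filter_mono (ae_mono hle1)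
  have hG2 : ∀ᵐ y ∂μm, G y =ᵐ[Q] Q[f y|m] := hG.filter_mono (ae_mono hle2)
  have hG3 : ∀ᵐ y ∂ν, G y =ᵐ[Q] Q[f y|m] := hG.filter_mono (ae_mono hle3)
  have h1 := aux_condexp_swap hm Q μp f G hint1 hGmeas hG1
  have h2 := aux_condexp_swap hm Q μm f G hint2 hGmeas hG2
  have h3 := aux_condexp_swap hm Q ν f G hint3 hGmeas hG3
  set M1 : Ω → ℝ := fun ω => ∫ y, f y ω ∂μp with hM1
  set M2 : Ω → ℝ := fun ω => ∫ y, f y ω ∂μm with hM2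
  set M3 : Ω → ℝ := fun ω => ∫ y, f y ω ∂ν with hM3
  have hM1i : Integrable M1 Q := hint1.integral_prod_right
  have hM2i : Integrable M2 Q := hint2.integral_prod_right
  have hM3i : Integrable M3 Q := hint3.integral_prod_right
  have hsum : (fun ω => (∫ y, G y ω ∂μp - ∫ y, G y ω ∂μm) - κ * ∫ y, G y ω ∂ν)
      =ᵐ[Q] fun ω => ((Q[M1|m]) ω - (Q[M2|m]) ω) - κ * (Q[M3|m]) ω := by
    filter_upwards [h1, h2, h3] with ω e1 e2 e3
    simp only [e1, e2, e3]
  have hlin : (fun ω => ((Q[M1|m]) ω - (Q[M2|m]) ω) - κ * (Q[M3|m]) ω)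
      =ᵐ[Q] Q[fun ω => (M1 ω - M2 ω) - κ * M3 ω|m] := by
    have c1 : Q[fun ω => (M1 ω - M2 ω) - κ * M3 ω|m]
        =ᵐ[Q] Q[fun ω => M1 ω - M2 ω|m] - Q[fun ω => κ * M3 ω|m] :=
      condExp_sub ((hM1i.sub hM2i)) (hM3i.const_mul κ) m
    have c2 : Q[fun ω => M1 ω - M2 ω|m] =ᵐ[Q] Q[M1|m] - Q[M2|m] := condExp_sub hM1i hM2i m
    have c3 : Q[fun ω => κ * M3 ω|m] =ᵐ[Q] κ • Q[M3|m] := condExp_smul κ M3 m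
    filter_upwards [c1, c2, c3] with ω hc1 hc2 hc3
    rw [hc1]
    simp only [Pi.sub_apply] at hc2 ⊢
    rw [hc2, hc3]
    simp [smul_eq_mul]
  have hptwise : (fun ω => (M1 ω - M2 ω) - κ * M3 ω) =ᵐ[Q] fun ω => max (Ξ ω - κ) 0 := by
    filter_upwards [hnorm] with ω hω
    have e1 : M1 ω = ind ω * ∫ y, F y ω ∂μp := by
      simp only [hM1, hf]
      exact integral_const_mul _ _
    have e2 : M2 ω = ind ω * ∫ y, F y ω ∂μm := by
      simp only [hM2, hf]
      exact integral_const_mul _ _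
    have e3 : M3 ω = ind ω * ∫ y, F y ω ∂ν := by
      simp only [hM3, hf]
      exact integral_const_mul _ _
    rw [e1, e2, e3, hω]
    have hΞω : Ξ ω = ∫ y, F y ω ∂μp - ∫ y, F y ω ∂μm := by rw [hΞ]
    by_cases hc : κ < Ξ ω
    · have hi1 : ind ω = 1 := Set.indicator_of_mem (by exact hc) _
      rw [hi1, max_eq_left (by linarith)]
      rw [hΞω]; ring
    · have hi0 : ind ω = 0 := Set.indicator_of_notMem (by exact hc) _
      rw [hi0, max_eq_right (by push_neg at hc; linarith)]
      ring
  exact hsum.trans (hlin.trans (condExp_congr_ae hptwise))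
end

section
/- Swap rate volatility identity: let V be a real vector space, let i < j be integers, let p_i, p_{i+1}, …, p_j be strictly positive real numbers with p_i ≠ p_j, let τ_i, …, τ_{j−1} be strictly positive real numbers, and let ζ_i, …, ζ_j ∈ V. Set p_ν := Σ_{k=i}^{j−1} τ_k·p_{k+1}, p̂_m := p_m/p_ν for m = i, …, j, and p_μ := p_i − p_j. Then p̂_i·Σ_{k=i}^{j−1} τ_k·p̂_{k+1}·(ζ_i − ζ_{k+1}) − p̂_j·Σ_{k=i}^{j−1} τ_k·p̂_{k+1}·(ζ_j − ζ_{k+1}) = (p_μ/p_ν)·[ (p_j/p_μ)·(ζ_i − ζ_j) + Σ_{k=i}^{j−1} τ_k·(p_{k+1}/p_ν)·(ζ_i − ζ_{k+1}) ]. (This identifies the integrated volatility ∫ σ̂_t(P̂_t, y) μ(dy) of the forward swap numeraire dynamics, for μ = δ_{T_i} − δ_{T_j} and ν = Σ_{k=i}^{j−1} τ_k δ_{T_{k+1}}, with the swap rate X̂ = p_μ/p_ν times the LIBOR swap rate volatility σ̂(t) of equation (36) of the paper.) -/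
/-!
The weights `τ k * phat (k+1)` sum to `pν / pν` (that is, to `1` unless `pν = 0`, where every
term on both sides vanishes). Moving the base point of the second sum from `ζ j` to `ζ i`
therefore only subtracts `(pν / pν) • (ζ i - ζ j)`, and the identity reduces to comparing
coefficients: `p j / pν` in front of `ζ i - ζ j`, and `phat i - phat j = pμ / pν` in front of
the first sum.
-/

open Finset

theorem Finset.sum_smul_sub_eq_sum_smul_sub_sub {ι R M : Type*} [Ring R] [AddCommGroup M]
    [Module R M] (s : Finset ι) (w : ι → R) (x : ι → M) (a b : M) :
    ∑ k ∈ s, w k • (b - x k) = ∑ k ∈ s, w k • (a - x k) - (∑ k ∈ s, w k) • (a - b) := by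
  rw [sum_smul, ← sum_sub_distrib]
  refine sum_congr rfl fun k _ => ?_
  rw [← smul_sub, sub_sub_sub_cancel_left]

theorem div_mul_div_self {G₀ : Type*} [GroupWithZero G₀] (a b : G₀) :
    a / b * (b / b) = a / b := by
  rcases eq_or_ne b 0 with rfl | hb
  · simp
  · rw [div_self hb, mul_one]

theorem swap_rate_volatility_identity_general {V : Type*} [AddCommGroup V] [Module ℝ V]
    {i j : ℕ} (p τ : ℕ → ℝ) (ζ : ℕ → V)
    (hpij : p i ≠ p j)
    (pν : ℝ) (hpν : pν = ∑ k ∈ Finset.Ico i j, τ k * p (k+1))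
    (phat : ℕ → ℝ) (hphat : ∀ n, phat n = p n / pν)
    (pμ : ℝ) (hpμ : pμ = p i - p j) :
    phat i • (∑ k ∈ Finset.Ico i j, (τ k * phat (k+1)) • (ζ i - ζ (k+1)))
      - phat j • (∑ k ∈ Finset.Ico i j, (τ k * phat (k+1)) • (ζ j - ζ (k+1)))
    = (pμ / pν) • ((p j / pμ) • (ζ i - ζ j)
        + ∑ k ∈ Finset.Ico i j, (τ k * (p (k+1) / pν)) • (ζ i - ζ (k+1))) := by
  have hpμ0 : pμ ≠ 0 := hpμ ▸ sub_ne_zero.mpr hpij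
  have hweights : ∑ k ∈ Ico i j, τ k * phat (k+1) = pν / pν := by
    simp only [hphat, ← mul_div_assoc, ← sum_div, ← hpν]
  rw [sum_smul_sub_eq_sum_smul_sub_sub (a := ζ i) (b := ζ j), hweights]
  simp only [hphat]
  set S := ∑ k ∈ Ico i j, (τ k * (p (k+1) / pν)) • (ζ i - ζ (k+1))
  have hS : p i / pν - p j / pν = pμ / pν := by rw [← sub_div, hpμ]
  have hD : p j / pν * (pν / pν) = pμ / pν * (p j / pμ) := by
    rw [div_mul_div_self, div_mul_div_cancel₀' hpμ0]
  calc (p i / pν) • S - (p j / pν) • (S - (pν / pν) • (ζ i - ζ j))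
      = (p i / pν - p j / pν) • S + (p j / pν * (pν / pν)) • (ζ i - ζ j) := by module
    _ = (pμ / pν) • ((p j / pμ) • (ζ i - ζ j) + S) := by rw [hS, hD]; module

/-- Swap rate volatility identity: with bond prices `p i, …, p j > 0`, tenor lengths
`τ i, …, τ (j-1) > 0`, bond volatilities `ζ i, …, ζ j` in a real vector space `V`,
annuity numeraire `pν = ∑_{k=i}^{j-1} τ k · p (k+1)`, forward bond prices
`phat n = p n / pν` and `pμ = p i − p j`, one has
`phat i • ∑ τ k · phat (k+1) • (ζ i − ζ (k+1)) − phat j • ∑ τ k · phat (k+1) • (ζ j − ζ (k+1))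
  = (pμ/pν) • ((p j/pμ) • (ζ i − ζ j) + ∑ (τ k · p (k+1)/pν) • (ζ i − ζ (k+1)))`. -/
theorem swap_rate_volatility_identity {V : Type*} [AddCommGroup V] [Module ℝ V]
    {i j : ℕ} (hij : i < j) (p τ : ℕ → ℝ) (ζ : ℕ → V)
    (hp : ∀ k ∈ Finset.Icc i j, 0 < p k) (hpij : p i ≠ p j)
    (hτ : ∀ k ∈ Finset.Ico i j, 0 < τ k)
    (pν : ℝ) (hpν : pν = ∑ k ∈ Finset.Ico i j, τ k * p (k+1))
    (phat : ℕ → ℝ) (hphat : ∀ n, phat n = p n / pν)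
    (pμ : ℝ) (hpμ : pμ = p i - p j) :
    phat i • (∑ k ∈ Finset.Ico i j, (τ k * phat (k+1)) • (ζ i - ζ (k+1)))
      - phat j • (∑ k ∈ Finset.Ico i j, (τ k * phat (k+1)) • (ζ j - ζ (k+1)))
    = (pμ / pν) • ((p j / pμ) • (ζ i - ζ j)
        + ∑ k ∈ Finset.Ico i j, (τ k * (p (k+1) / pν)) • (ζ i - ζ (k+1))) :=
  swap_rate_volatility_identity_general p τ ζ hpij pν hpν phat hphat pμ hpμ
end
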